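/- There exists a function f : ℝ → ℝ such that f is continuous on [0,1], f(x) = 0 for every x in the ternary Cantor set, there is an uncountable subset S of the ternary Cantor set such that f cuts the real axis at every point of S, and f is not absolutely continuous on [0,1]. -/

import Mathlib

/-- `f` cuts the real axis at `a` (within `[0,1]`): `f a = 0` and every open interval
around `a` contains points `b, c` of `[0,1]` with `f b < 0` and `f c > 0`. -/
def CutsAxisAt (f : ℝ → ℝ) (a : ℝ) : Prop :=
  f a = 0 ∧ ∀ u v : ℝ, u < a → a < v →
    (∃ b ∈ Set.Ioo u v ∩ Set.Icc (0:ℝ) 1, f b < 0) ∧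
    (∃ c ∈ Set.Ioo u v ∩ Set.Icc (0:ℝ) 1, f c > 0)

/-- `f` is absolutely continuous on `[a, b]`. -/
def AbsolutelyContinuousOn (f : ℝ → ℝ) (a b : ℝ) : Prop :=
  ∀ ε > (0:ℝ), ∃ δ > (0:ℝ), ∀ n : ℕ, ∀ c d : Fin n → ℝ,
    (∀ i, a ≤ c i ∧ c i < d i ∧ d i ≤ b) →
    (Pairwise fun i j => Disjoint (Set.Ioo (c i) (d i)) (Set.Ioo (c j) (d j))) →
    (∑ i, (d i - c i)) < δ →
    (∑ i, |f (d i) - f (c i)|) < ε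


/-!
Take `f = φ ∘ d` with `d x = infDist x C` and `φ t = t sin (1 / t²)`. Every point `a ∈ C` is a
limit of points `x ∈ [0,1] \ C`; along the segment from the nearest point of `C` to `x`, `d` runs
through all of `[0, d x]`, so `f` takes both signs arbitrarily close to `a`. On the gap
`(1/3, 2/3)` we have `f (1/3 + t) = φ t`, and `φ` is not absolutely continuous at `0`: the `N + 1`
disjoint intervals `(1 / √((k + 1)π), 1 / √(kπ + π/2))`, `N ≤ k ≤ 2N`, have total length
`< 1 / √(Nπ)`, while `φ` varies by `1 / √(kπ + π/2) ≥ 1 / (N + 1)` on each of them.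
-/

open Real Set Metric

noncomputable def mulSinInvSq (t : ℝ) : ℝ := t * sin ((t ^ 2)⁻¹)

lemma abs_mulSinInvSq_le (t : ℝ) : |mulSinInvSq t| ≤ |t| := by
  rw [mulSinInvSq, abs_mul]
  exact mul_le_of_le_one_right (abs_nonneg t) (abs_sin_le_one _)

lemma continuous_mulSinInvSq : Continuous mulSinInvSq := by
  rw [continuous_iff_continuousAt]
  intro t
  rcases eq_or_ne t 0 with rfl | ht
  · have h0 : mulSinInvSq 0 = 0 := by simp [mulSinInvSq]
    rw [ContinuousAt, h0]
    exact squeeze_zero_norm abs_mulSinInvSq_le (continuous_abs.tendsto' 0 0 abs_zero)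
  · exact continuousAt_id.mul (continuous_sin.continuousAt.comp
      ((continuousAt_id.pow 2).inv₀ (pow_ne_zero 2 ht)))

lemma inv_sqrt_lt {h θ : ℝ} (hh : 0 < h) (hθ : h⁻¹ ^ 2 < θ) : (√θ)⁻¹ < h := by
  have hs : h⁻¹ < √θ := (lt_sqrt (inv_pos.2 hh).le).2 hθ
  exact (inv_lt_comm₀ ((inv_pos.2 hh).trans hs) hh).2 hs

lemma mulSinInvSq_inv_sqrt {θ : ℝ} (hθ : 0 ≤ θ) :
    mulSinInvSq (√θ)⁻¹ = (√θ)⁻¹ * sin θ := by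
  rw [mulSinInvSq, inv_pow, sq_sqrt hθ, inv_inv]

lemma exists_mulSinInvSq_eq (φ : ℝ) {r : ℝ} (hr : 0 < r) :
    ∃ s ∈ Ioo 0 r, mulSinInvSq s = s * sin φ := by
  obtain ⟨k, hk⟩ := exists_nat_gt ((r⁻¹ ^ 2 - φ) / (2 * π))
  have hθ : r⁻¹ ^ 2 < φ + k * (2 * π) := by
    rw [div_lt_iff₀ (by positivity)] at hk
    linarith
  have hθ0 : 0 < φ + k * (2 * π) := lt_of_le_of_lt (by positivity) hθ
  refine ⟨(√(φ + k * (2 * π)))⁻¹, ⟨by positivity, inv_sqrt_lt hr hθ⟩, ?_⟩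
  rw [mulSinInvSq_inv_sqrt hθ0.le, sin_add_nat_mul_two_pi]

noncomputable def peakPt (k : ℕ) : ℝ := (√(k * π + π / 2))⁻¹

noncomputable def rootPt (k : ℕ) : ℝ := (√(k * π))⁻¹

lemma abs_mulSinInvSq_peakPt (k : ℕ) : |mulSinInvSq (peakPt k)| = peakPt k := by
  rw [peakPt, mulSinInvSq_inv_sqrt (by positivity), sin_add_pi_div_two, cos_nat_mul_pi, abs_mul,
    abs_pow, abs_neg, abs_one, one_pow, mul_one, abs_of_nonneg (by positivity)]

lemma mulSinInvSq_rootPt (k : ℕ) : mulSinInvSq (rootPt k) = 0 := by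
  rw [rootPt, mulSinInvSq_inv_sqrt (by positivity), sin_nat_mul_pi, mul_zero]

lemma antitone_peakPt : Antitone peakPt := fun k m hkm =>
  inv_anti₀ (by positivity) (sqrt_le_sqrt (by gcongr))

lemma peakPt_lt_rootPt {k : ℕ} (hk : k ≠ 0) : peakPt k < rootPt k := by
  have hk : (0 : ℝ) < k * π := by positivity
  exact inv_strictAnti₀ (sqrt_pos.2 hk) (sqrt_lt_sqrt hk.le (by linarith [pi_pos]))

lemma rootPt_succ_lt_peakPt (k : ℕ) : rootPt (k + 1) < peakPt k :=
  inv_strictAnti₀ (by positivity) (sqrt_lt_sqrt (by positivity) (by push_cast; linarith [pi_pos]))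

lemma rootPt_pos {k : ℕ} (hk : k ≠ 0) : 0 < rootPt k := by
  rw [rootPt]
  positivity

lemma sum_peakPt_sub_rootPt_lt (N : ℕ) (hN : N ≠ 0) :
    ∑ i : Fin (N + 1), (peakPt (N + i) - rootPt (N + i + 1)) < rootPt N := by
  calc ∑ i : Fin (N + 1), (peakPt (N + i) - rootPt (N + i + 1))
      ≤ ∑ i : Fin (N + 1), (rootPt (N + i) - rootPt (N + i + 1)) := by
        gcongr with i
        exact (peakPt_lt_rootPt (by omega)).le
    _ = rootPt N - rootPt (N + (N + 1)) :=
        (Fin.sum_univ_eq_sum_range (fun i => rootPt (N + i) - rootPt (N + i + 1)) _).trans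
          (Finset.sum_range_sub' (fun i => rootPt (N + i)) _)
    _ < rootPt N := sub_lt_self _ (rootPt_pos (by omega))

lemma one_le_sum_peakPt {N : ℕ} (hN : 5 ≤ N) : 1 ≤ ∑ i : Fin (N + 1), peakPt (N + i) := by
  have hN' : (5 : ℝ) ≤ N := by exact_mod_cast hN
  have hlow : ((N : ℝ) + 1)⁻¹ ≤ peakPt (2 * N) := by
    refine inv_anti₀ (by positivity) ((sqrt_le_left (by positivity)).2 ?_)
    push_cast
    nlinarith [pi_lt_d2]
  calc (1 : ℝ) = ∑ _i : Fin (N + 1), ((N : ℝ) + 1)⁻¹ := by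
        simp only [Finset.sum_const, Finset.card_univ, Fintype.card_fin, nsmul_eq_mul, Nat.cast_add,
          Nat.cast_one]
        field_simp
    _ ≤ ∑ i : Fin (N + 1), peakPt (N + i) := by
        gcongr with i
        exact hlow.trans (antitone_peakPt (by omega))

lemma pairwise_disjoint_Ioo_of_le {ι α : Type*} [LinearOrder ι] [Preorder α] {l r : ι → α}
    (h : ∀ i j, i < j → r j ≤ l i) :
    Pairwise fun i j => Disjoint (Ioo (l i) (r i)) (Ioo (l j) (r j)) := by
  have hlt {i j : ι} (hij : i < j) : Disjoint (Ioo (l j) (r j)) (Ioo (l i) (r i)) :=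
    (Ioc_disjoint_Ioc_of_le (h i j hij)).mono Ioo_subset_Ioc_self Ioo_subset_Ioc_self
  intro i j hij
  rcases hij.lt_or_gt with hij | hij
  · exact (hlt hij).symm
  · exact hlt hij

lemma not_absolutelyContinuousOn_of_mulSinInvSq {f : ℝ → ℝ} {a b c h : ℝ} (hh : 0 < h)
    (hac : a ≤ c) (hcb : c + h ≤ b) (hf : ∀ t ∈ Icc 0 h, f (c + t) = mulSinInvSq t) :
    ¬ AbsolutelyContinuousOn f a b := by
  intro H
  obtain ⟨δ, hδ, H⟩ := H 1 one_pos
  obtain ⟨N, hN⟩ := exists_nat_gt (δ⁻¹ ^ 2 + h⁻¹ ^ 2 + 5)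
  have hN5 : 5 ≤ N := by
    have : (5 : ℝ) < N := by linarith [sq_nonneg δ⁻¹, sq_nonneg h⁻¹]
    exact_mod_cast this.le
  have hrootδ : rootPt N < δ := inv_sqrt_lt hδ (by nlinarith [pi_gt_three, sq_nonneg h⁻¹])
  have hpeakh : peakPt N < h :=
    inv_sqrt_lt hh (by nlinarith [pi_gt_three, sq_nonneg δ⁻¹, pi_pos])
  have hpeak (i : Fin (N + 1)) : 0 < rootPt (N + i + 1) ∧ rootPt (N + i + 1) < peakPt (N + i) ∧
      peakPt (N + i) < h :=
    ⟨rootPt_pos (by omega), rootPt_succ_lt_peakPt _,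
      (antitone_peakPt (by omega)).trans_lt hpeakh⟩
  set l : Fin (N + 1) → ℝ := fun i => c + rootPt (N + i + 1)
  set r : Fin (N + 1) → ℝ := fun i => c + peakPt (N + i)
  have hlr (i : Fin (N + 1)) : a ≤ l i ∧ l i < r i ∧ r i ≤ b := by
    obtain ⟨h1, h2, h3⟩ := hpeak i
    exact ⟨by linarith, by simp only [l, r]; linarith, by simp only [r]; linarith⟩
  have hdisj : Pairwise fun i j => Disjoint (Ioo (l i) (r i)) (Ioo (l j) (r j)) := by
    refine pairwise_disjoint_Ioo_of_le fun i j hij => ?_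
    simp only [l, r, add_le_add_iff_left]
    exact (antitone_peakPt (by simp only [Fin.lt_def] at hij; omega)).trans
      (peakPt_lt_rootPt (by omega)).le
  have hlen : ∑ i, (r i - l i) < δ := by
    simp only [l, r, add_sub_add_left_eq_sub]
    exact (sum_peakPt_sub_rootPt_lt N (by omega)).trans hrootδ
  have hvar : ∑ i, |f (r i) - f (l i)| = ∑ i : Fin (N + 1), peakPt (N + i) := by
    refine Finset.sum_congr rfl fun i _ => ?_
    obtain ⟨h1, h2, h3⟩ := hpeak i
    rw [hf _ ⟨h1.le.trans h2.le, h3.le⟩, hf _ ⟨h1.le, (h2.trans h3).le⟩, mulSinInvSq_rootPt,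
      sub_zero, abs_mulSinInvSq_peakPt]
  linarith [H (N + 1) l r hlr hdisj hlen, one_le_sum_peakPt hN5]

lemma infDist_lineMap_of_infDist_eq_dist {E : Type*} [NormedAddCommGroup E] [NormedSpace ℝ E]
    {s : Set E} {c x : E} (hc : c ∈ s) (hx : infDist x s = dist x c) {t : ℝ} (ht : t ∈ Icc 0 1) :
    infDist (AffineMap.lineMap c x t) s = t * dist c x := by
  apply le_antisymm
  · simpa [dist_lineMap_left, abs_of_nonneg ht.1] using
      infDist_le_dist_of_mem (x := AffineMap.lineMap c x t) hc
  · have := infDist_le_infDist_add_dist (x := x) (y := AffineMap.lineMap c x t) (s := s)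
    rw [hx, dist_comm x c, dist_comm x, dist_lineMap_right,
      Real.norm_of_nonneg (by linarith [ht.2])] at this
    nlinarith

lemma infDist_add_eq_of_disjoint_Ioo {s : Set ℝ} {a b t : ℝ} (ha : a ∈ s)
    (hs : Disjoint s (Ioo a b)) (ht0 : 0 ≤ t) (ht : t ≤ (b - a) / 2) : infDist (a + t) s = t := by
  refine le_antisymm (by simpa [abs_of_nonneg ht0] using infDist_le_dist_of_mem (x := a + t) ha)
    ((le_infDist ⟨a, ha⟩).2 fun y hy => ?_)
  rw [Real.dist_eq]
  by_cases hya : y ≤ a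
  · rw [abs_of_nonneg (by linarith)]; linarith
  · have hby : b ≤ y := not_lt.1 fun hyb => disjoint_left.1 hs hy ⟨not_le.1 hya, hyb⟩
    rw [abs_of_nonpos (by linarith)]; linarith

lemma exists_mulSinInvSq_infDist_eq {E : Type*} [NormedAddCommGroup E] [NormedSpace ℝ E]
    [ProperSpace E] {K s : Set E} (hK : Convex ℝ K) (hs : IsClosed s) (hsK : s ⊆ K) {a : E}
    (ha : a ∈ s) (hclos : a ∈ closure (K \ s)) (φ : ℝ) {ε : ℝ} (hε : 0 < ε) :
    ∃ y ∈ ball a ε ∩ K, ∃ σ > 0, mulSinInvSq (infDist y s) = σ * sin φ := by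
  obtain ⟨x, ⟨hxK, hxs⟩, hax⟩ := Metric.mem_closure_iff.1 hclos (ε / 2) (half_pos hε)
  obtain ⟨c, hc, hxc⟩ := hs.exists_infDist_eq_dist ⟨a, ha⟩ x
  have hr : 0 < dist c x := dist_pos.2 fun h => hxs (h ▸ hc)
  have hcx : dist x c ≤ dist x a := hxc ▸ infDist_le_dist_of_mem ha
  have hcball : c ∈ ball a ε := by
    rw [mem_ball]
    linarith [dist_triangle c x a, dist_comm c x, dist_comm a x]
  have hxball : x ∈ ball a ε := by
    rw [mem_ball, dist_comm]
    linarith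
  obtain ⟨σ, hσ, hfσ⟩ := exists_mulSinInvSq_eq φ hr
  have ht : σ / dist c x ∈ Icc 0 1 :=
    ⟨div_nonneg hσ.1.le hr.le, (div_le_one hr).2 hσ.2.le⟩
  have hseg := lineMap_mem_segment ℝ c x ht
  refine ⟨AffineMap.lineMap c x (σ / dist c x),
    ⟨(convex_ball a ε).segment_subset hcball hxball hseg, hK.segment_subset (hsK hc) hxK hseg⟩,
    σ, hσ.1, ?_⟩
  rw [infDist_lineMap_of_infDist_eq_dist hc hxc ht, div_mul_cancel₀ _ hr.ne', hfσ]

lemma cutsAxisAt_mulSinInvSq_infDist {s : Set ℝ} (hs : IsClosed s) (hsI : s ⊆ Icc 0 1) {a : ℝ}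
    (ha : a ∈ s) (hclos : a ∈ closure (Icc 0 1 \ s)) :
    CutsAxisAt (fun x => mulSinInvSq (infDist x s)) a := by
  refine ⟨by simp [infDist_zero_of_mem ha, mulSinInvSq], fun u v hu hv => ?_⟩
  set ε := min (a - u) (v - a)
  have hε : 0 < ε := lt_min (by linarith) (by linarith)
  have hball : ball a ε ⊆ Ioo u v := by
    rw [Real.ball_eq_Ioo]
    exact Ioo_subset_Ioo (by linarith [min_le_left (a - u) (v - a)])
      (by linarith [min_le_right (a - u) (v - a)])
  have hnear := exists_mulSinInvSq_infDist_eq (convex_Icc 0 1) hs hsI ha hclos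
  obtain ⟨b, ⟨hbε, hbI⟩, σ, hσ, hb⟩ := hnear (-(π / 2)) hε
  obtain ⟨c, ⟨hcε, hcI⟩, τ, hτ, hc⟩ := hnear (π / 2) hε
  refine ⟨⟨b, ⟨hball hbε, hbI⟩, ?_⟩, ⟨c, ⟨hball hcε, hcI⟩, ?_⟩⟩
  · change mulSinInvSq (infDist b s) < 0
    rw [hb, sin_neg, sin_pi_div_two]
    linarith
  · change mulSinInvSq (infDist c s) > 0
    rw [hc, sin_pi_div_two]
    linarith

lemma one_mem_cantorSet : (1 : ℝ) ∈ cantorSet := by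
  refine mem_iInter.2 fun n => ?_
  induction n with
  | zero => simp
  | succ n ih => exact Or.inr ⟨1, ih, by norm_num⟩

lemma one_third_mem_cantorSet : (1 / 3 : ℝ) ∈ cantorSet := by
  rw [cantorSet_eq_union_halves]
  exact Or.inl ⟨1, one_mem_cantorSet, rfl⟩

lemma disjoint_cantorSet_Ioo : Disjoint cantorSet (Ioo (1 / 3) (2 / 3)) := by
  rw [cantorSet_eq_union_halves, disjoint_left]
  rintro x (⟨y, hy, rfl⟩ | ⟨y, hy, rfl⟩) hx <;>
    · have := cantorSet_subset_unitInterval hy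
      simp only [mem_Ioo, mem_Icc] at hx this
      linarith

lemma mem_cantorSet_of_div_three_mem {x : ℝ} (hx : x ≤ 1) (h : x / 3 ∈ cantorSet) :
    x ∈ cantorSet := by
  rw [cantorSet_eq_union_halves] at h
  rcases h with ⟨y, hy, hyx⟩ | ⟨y, hy, hyx⟩
  · simpa [show y = x by linarith] using hy
  · linarith [(cantorSet_subset_unitInterval hy).1]

lemma mem_cantorSet_of_two_add_div_three_mem {x : ℝ} (hx : 0 ≤ x)
    (h : (2 + x) / 3 ∈ cantorSet) : x ∈ cantorSet := by
  rw [cantorSet_eq_union_halves] at h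
  rcases h with ⟨y, hy, hyx⟩ | ⟨y, hy, hyx⟩
  · linarith [(cantorSet_subset_unitInterval hy).2]
  · simpa [show y = x by linarith] using hy

lemma exists_notMem_cantorSet_near (n : ℕ) {a : ℝ} (ha : a ∈ cantorSet) :
    ∃ x ∈ Icc 0 1 \ cantorSet, dist a x ≤ (3 : ℝ)⁻¹ ^ n := by
  induction n generalizing a with
  | zero =>
    obtain ⟨h0, h1⟩ := cantorSet_subset_unitInterval ha
    refine ⟨1 / 2, ⟨by norm_num, disjoint_right.1 disjoint_cantorSet_Ioo (by norm_num)⟩, ?_⟩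
    rw [Real.dist_eq, pow_zero, abs_le]
    constructor <;> linarith
  | succ n ih =>
    rw [cantorSet_eq_union_halves] at ha
    rcases ha with ⟨y, hy, rfl⟩ | ⟨y, hy, rfl⟩ <;> obtain ⟨x, ⟨⟨hx0, hx1⟩, hxC⟩, hyx⟩ := ih hy
    · refine ⟨x / 3, ⟨⟨by linarith, by linarith⟩,
        fun h => hxC (mem_cantorSet_of_div_three_mem hx1 h)⟩, ?_⟩
      rw [Real.dist_eq] at hyx ⊢
      rw [← sub_div, abs_div, pow_succ]
      simp only [abs_of_pos (by norm_num : (0 : ℝ) < 3)]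
      linarith
    · refine ⟨(2 + x) / 3, ⟨⟨by linarith, by linarith⟩,
        fun h => hxC (mem_cantorSet_of_two_add_div_three_mem hx0 h)⟩, ?_⟩
      rw [Real.dist_eq] at hyx ⊢
      rw [← sub_div, abs_div, pow_succ, show 2 + y - (2 + x) = y - x by ring]
      simp only [abs_of_pos (by norm_num : (0 : ℝ) < 3)]
      linarith

lemma mem_closure_Icc_diff_cantorSet {a : ℝ} (ha : a ∈ cantorSet) :
    a ∈ closure (Icc 0 1 \ cantorSet) := by
  refine Metric.mem_closure_iff.2 fun ε hε => ?_
  obtain ⟨n, hn⟩ := exists_pow_lt_of_lt_one hε (by norm_num : (3 : ℝ)⁻¹ < 1)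
  obtain ⟨x, hx, hax⟩ := exists_notMem_cantorSet_near n ha
  exact ⟨x, hx, hax.trans_lt hn⟩

lemma not_countable_cantorSet : ¬ cantorSet.Countable := by
  rw [← countable_coe_iff, cantorSetEquivNatToBool.countable_iff, ← Cardinal.mk_le_aleph0_iff,
    not_le]
  simpa using Cardinal.cantor Cardinal.aleph0

theorem stmt_2 :
    ∃ f : ℝ → ℝ,
      ContinuousOn f (Set.Icc 0 1) ∧
      (∀ x ∈ cantorSet, f x = 0) ∧
      (∃ S : Set ℝ, S ⊆ cantorSet ∧ ¬ S.Countable ∧ ∀ a ∈ S, CutsAxisAt f a) ∧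
      ¬ AbsolutelyContinuousOn f 0 1 := by
  have hcuts (a : ℝ) (ha : a ∈ cantorSet) :
      CutsAxisAt (fun x => mulSinInvSq (infDist x cantorSet)) a :=
    cutsAxisAt_mulSinInvSq_infDist isClosed_cantorSet cantorSet_subset_unitInterval ha
      (mem_closure_Icc_diff_cantorSet ha)
  refine ⟨fun x => mulSinInvSq (infDist x cantorSet),
    (continuous_mulSinInvSq.comp (continuous_infDist_pt _)).continuousOn,
    fun a ha => (hcuts a ha).1, ⟨cantorSet, subset_rfl, not_countable_cantorSet, hcuts⟩, ?_⟩
  refine not_absolutelyContinuousOn_of_mulSinInvSq (c := 1 / 3) (h := 1 / 6) (by norm_num)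
    (by norm_num) (by norm_num) fun t ht => ?_
  rw [infDist_add_eq_of_disjoint_Ioo one_third_mem_cantorSet disjoint_cantorSet_Ioo ht.1
    (by linarith [ht.2])]
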